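/- If A, B ∈ Mₙ(ℂ) satisfy A y and B y are linearly dependent vectors for every y ∈ ℂⁿ, and rk(A) ≥ 2, then B is a scalar multiple of A. -/
import Mathlib


open Matrix

/-- The operator (spectral) norm of a complex matrix, induced by the Euclidean norm on `ℂⁿ`. -/
noncomputable def opNorm {n : ℕ} (A : Matrix (Fin n) (Fin n) ℂ) : ℝ :=
  ‖Matrix.toEuclideanCLM (𝕜 := ℂ) (n := Fin n) A‖

/-- Birkhoff–James orthogonality of matrices with respect to the operator norm. -/
def BJ {n : ℕ} (A B : Matrix (Fin n) (Fin n) ℂ) : Prop :=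
  ∀ c : ℂ, opNorm A ≤ opNorm (A + c • B)

/-- If `A y` and `B y` are linearly dependent for every `y` and `rk A ≥ 2`,
then `B` is a scalar multiple of `A`. -/
theorem stmt3 {n : ℕ} (A B : Matrix (Fin n) (Fin n) ℂ)
    (hdep : ∀ y : Fin n → ℂ, ∃ c d : ℂ, (c ≠ 0 ∨ d ≠ 0) ∧
      c • A.mulVec y + d • B.mulVec y = 0)
    (hrk : 2 ≤ A.rank) :
    ∃ c : ℂ, B = c • A := by
  classical
  -- Step 1: for y with A y ≠ 0, B y is a multiple of A y.
  have hB : ∀ y : Fin n → ℂ, A.mulVec y ≠ 0 → ∃ c : ℂ, B.mulVec y = c • A.mulVec y := by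
    intro y hy
    obtain ⟨c, d, hcd, h⟩ := hdep y
    by_cases hd : d = 0
    · subst hd
      rcases hcd with hc | hc
      · exfalso
        apply hy
        simpa using smul_eq_zero.mp (by simpa using h) |>.resolve_left hc
      · exact absurd rfl hc
    · refine ⟨-c / d, ?_⟩
      have hd' : d • B.mulVec y = (-c) • A.mulVec y := by
        linear_combination (norm := module) h
      have := congrArg (fun v => d⁻¹ • v) hd'
      simp only [smul_smul, inv_mul_cancel₀ hd, one_smul] at this
      rw [this, div_eq_inv_mul]
  -- Step 2: for any v, there is z with A z not a multiple of v.
  have hspan : ∀ v : Fin n → ℂ, ∃ z : Fin n → ℂ, ∀ t : ℂ, A.mulVec z ≠ t • v := by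
    intro v
    by_contra h
    push_neg at h
    have hle : LinearMap.range A.mulVecLin ≤ Submodule.span ℂ {v} := by
      rintro x ⟨z, rfl⟩
      obtain ⟨t, ht⟩ := h z
      rw [Matrix.mulVecLin_apply, ht]
      exact Submodule.smul_mem _ _ (Submodule.mem_span_singleton_self v)
    have h1 : A.rank ≤ Module.finrank ℂ (Submodule.span ℂ ({v} : Set (Fin n → ℂ))) :=
      Submodule.finrank_mono hle
    have h2 : Module.finrank ℂ (Submodule.span ℂ ({v} : Set (Fin n → ℂ))) ≤ 1 := by
      by_cases hv : v = 0
      · subst hv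
        rw [Submodule.span_zero_singleton]
        simp
      · rw [finrank_span_singleton hv]
    omega
  -- independence predicate
  set Indep : (Fin n → ℂ) → (Fin n → ℂ) → Prop :=
    fun u w => ∀ s t : ℂ, s • u + t • w = 0 → s = 0 ∧ t = 0 with hIndep
  have hIndep_of : ∀ u w : Fin n → ℂ, w ≠ 0 → (∀ t : ℂ, u ≠ t • w) → Indep u w := by
    intro u w hw hu s t hst
    by_cases hs : s = 0
    · subst hs
      simp only [zero_smul, zero_add] at hst
      exact ⟨rfl, (smul_eq_zero.mp hst).resolve_right hw⟩
    · exfalso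
      apply hu (-t / s)
      have hs' : s • u = (-t) • w := by
        linear_combination (norm := module) hst
      have := congrArg (fun v => s⁻¹ • v) hs'
      simp only [smul_smul, inv_mul_cancel₀ hs, one_smul] at this
      rw [this, div_eq_inv_mul]
  -- Step 3: coefficients agree on vectors with independent images.
  have hstep : ∀ y z : Fin n → ℂ, Indep (A.mulVec y) (A.mulVec z) →
      ∀ c c' : ℂ, B.mulVec y = c • A.mulVec y → B.mulVec z = c' • A.mulVec z → c = c' := by
    intro y z hind c c' hc hc'
    have hyz : A.mulVec (y + z) ≠ 0 := by
      rw [Matrix.mulVec_add]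
      intro h0
      have := hind 1 1 (by simpa using h0)
      simp at this
    obtain ⟨c'', hc''⟩ := hB (y + z) hyz
    rw [Matrix.mulVec_add, Matrix.mulVec_add, hc, hc'] at hc''
    have key : (c - c'') • A.mulVec y + (c' - c'') • A.mulVec z = 0 := by
      have := sub_eq_zero.mpr hc''
      rw [smul_add] at this
      rw [sub_smul, sub_smul]
      linear_combination (norm := module) this
    obtain ⟨h1, h2⟩ := hind _ _ key
    rw [sub_eq_zero] at h1 h2
    rw [h1, h2]
  -- pick y0 with A y0 ≠ 0
  obtain ⟨y0, hy0'⟩ := hspan 0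
  have hy0 : A.mulVec y0 ≠ 0 := by simpa using hy0' 0
  obtain ⟨c0, hc0⟩ := hB y0 hy0
  refine ⟨c0, ?_⟩
  have key : ∀ y : Fin n → ℂ, A.mulVec y ≠ 0 → B.mulVec y = c0 • A.mulVec y := by
    intro y hy
    obtain ⟨c, hc⟩ := hB y hy
    suffices hcc : c = c0 by rw [hc, hcc]
    by_cases hind : ∀ t : ℂ, A.mulVec y ≠ t • A.mulVec y0
    · exact hstep y y0 (hIndep_of _ _ hy0 hind) c c0 hc hc0
    · push_neg at hind
      obtain ⟨t, ht⟩ := hind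
      obtain ⟨z, hz⟩ := hspan (A.mulVec y0)
      have hzne : A.mulVec z ≠ 0 := fun h => hz 0 (by simpa using h)
      obtain ⟨cz, hcz⟩ := hB z hzne
      have e0 : cz = c0 := hstep z y0 (hIndep_of _ _ hy0 hz) cz c0 hcz hc0
      have h2 : Indep (A.mulVec z) (A.mulVec y) :=
        hIndep_of _ _ hy (fun s hs => hz (s * t) (by rw [hs, ht, smul_smul]))
      have e1 : cz = c := hstep z y h2 cz c hcz hc
      rw [← e1, e0]
  have hAll : ∀ y : Fin n → ℂ, B.mulVec y = c0 • A.mulVec y := by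
    intro y
    by_cases hy : A.mulVec y = 0
    · rw [hy, smul_zero]
      have h1 : A.mulVec (y + y0) = A.mulVec y0 := by rw [Matrix.mulVec_add, hy, zero_add]
      have h2 := key (y + y0) (h1 ▸ hy0)
      rw [Matrix.mulVec_add, h1, ← hc0] at h2
      exact add_eq_right.mp h2
    · exact key y hy
  ext i j
  have := congrFun (hAll (Pi.single j 1)) i
  simpa [Matrix.mulVec_single] using this
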